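/- Fix any sign configuration ξ : ℤ²_e → {−1,+1}. Consider the directed graph on ℤ²_e with edges from (i,n) to (i+1,n+1) and to (i+1,n−1), where the edge from (i,n) to (i+1, n+ξ_{(i,n)}) has weight 0 and the edge from (i,n) to (i+1, n−ξ_{(i,n)}) has weight 1. Then for all (i,n), (j,m) ∈ ℤ²_e, the random walk web distance D^RW(i,n;j,m) equals the first passage time from (i,n) to (j,m), i.e. the minimum over all directed paths from (i,n) to (j,m) of the total edge weight (with the minimum over the empty set equal to ∞, in particular D^RW = ∞ when no directed path exists). -/
import Mathlib


noncomputable section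

/-- Forward random walk web path started at `(i,n)`, after `k` steps. -/
def Yfwd (ξ : ℤ × ℤ → ℤ) (i n : ℤ) : ℕ → ℤ
  | 0 => n
  | k + 1 => Yfwd ξ i n k + ξ (i + k, Yfwd ξ i n k)

/-- `Yf ξ i n j` is the position at time `j ≥ i` of the forward random walk web
path `Y_{(i,n)}`; it satisfies `Y(i) = n` and `Y(j+1) = Y(j) + ξ(j, Y(j))`. -/
def Yf (ξ : ℤ × ℤ → ℤ) (i n j : ℤ) : ℤ := Yfwd ξ i n (j - i).toNat

/-- `pathTo ξ a b` : there is a path of the forward random walk web `Y` from `a` to `b`. -/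
def pathTo (ξ : ℤ × ℤ → ℤ) (a b : ℤ × ℤ) : Prop :=
  a.1 ≤ b.1 ∧ Yf ξ a.1 a.2 b.1 = b.2

/-- `webChain ξ a b k` : one can go from `a` to `b` following forward web paths with
exactly `k` jumps, at jump points `z 1, …, z k ∈ ℤ²ₑ`. -/
def webChain (ξ : ℤ × ℤ → ℤ) (a b : ℤ × ℤ) (k : ℕ) : Prop :=
  ∃ z : ℕ → ℤ × ℤ, (∀ l, 1 ≤ l → l ≤ k → Even ((z l).1 + (z l).2)) ∧
    ∀ l ≤ k, pathTo ξ (if l = 0 then a else ((z l).1 + 1, (z l).2 - ξ (z l)))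
      (if l = k then b else z (l + 1))

/-- The random walk web distance `D^RW(a; b) ∈ ℕ ∪ {∞}`. -/
def DRW (ξ : ℤ × ℤ → ℤ) (a b : ℤ × ℤ) : ℕ∞ :=
  sInf {c : ℕ∞ | ∃ k : ℕ, c = (k : ℕ∞) ∧ webChain ξ a b k}

/-- A directed edge of the lattice `ℤ²ₑ`: from `(i,n)` to `(i+1, n±1)`. -/
def isStep (p q : ℤ × ℤ) : Prop :=
  q.1 = p.1 + 1 ∧ (q.2 = p.2 + 1 ∨ q.2 = p.2 - 1)

/-- First passage time from `a` to `b`: minimum over directed paths from `a` to `b`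
of the total edge weight, where the edge from `(i,n)` to `(i+1, n+ξ(i,n))` has
weight `0` and the edge to `(i+1, n-ξ(i,n))` has weight `1`; the minimum over the
empty set is `∞`. -/
def FPT (ξ : ℤ × ℤ → ℤ) (a b : ℤ × ℤ) : ℕ∞ :=
  sInf {c : ℕ∞ | ∃ (L : ℕ) (p : ℕ → ℤ × ℤ), p 0 = a ∧ p L = b ∧
    (∀ l < L, isStep (p l) (p (l + 1))) ∧
    c = ∑ l ∈ Finset.range L, (if (p (l + 1)).2 = (p l).2 + ξ (p l) then 0 else 1)}

def Mem (ξ : ℤ × ℤ → ℤ) (a b : ℤ × ℤ) (c : ℕ∞) : Prop :=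
  ∃ (L : ℕ) (p : ℕ → ℤ × ℤ), p 0 = a ∧ p L = b ∧
    (∀ l < L, isStep (p l) (p (l + 1))) ∧
    c = ∑ l ∈ Finset.range L, (if (p (l + 1)).2 = (p l).2 + ξ (p l) then 0 else 1)

lemma Yfwd_shift (ξ : ℤ × ℤ → ℤ) (i n : ℤ) (d : ℕ) :
    Yfwd ξ i n (d + 1) = Yfwd ξ (i + 1) (n + ξ (i, n)) d := by
  induction d with
  | zero => simp [Yfwd]
  | succ d ih =>
      show Yfwd ξ i n (d+1) + ξ (i + ((d:ℕ)+1 : ℕ), Yfwd ξ i n (d+1)) = _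
      rw [ih]
      show _ = Yfwd ξ (i+1) (n + ξ (i,n)) d + ξ (i + 1 + (d:ℤ), _)
      congr 2
      push_cast; ring

lemma pathTo_self (ξ : ℤ × ℤ → ℤ) (a : ℤ × ℤ) : pathTo ξ a a := by
  refine ⟨le_refl _, ?_⟩
  simp [Yf, Yfwd]

lemma Mem_refl (ξ : ℤ × ℤ → ℤ) (a : ℤ × ℤ) : Mem ξ a a 0 :=
  ⟨0, fun _ => a, rfl, rfl, by omega, by simp⟩

lemma Mem_prepend {ξ : ℤ × ℤ → ℤ} {a q b : ℤ × ℤ} {c : ℕ∞}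
    (hs : isStep a q) (h : Mem ξ q b c) :
    Mem ξ a b ((if q.2 = a.2 + ξ a then 0 else 1) + c) := by
  obtain ⟨L, p, h0, hL, hstep, hc⟩ := h
  refine ⟨L + 1, fun l => if l = 0 then a else p (l - 1), by simp, by simp [hL], ?_, ?_⟩
  · intro l hl
    match l with
    | 0 => simpa [h0] using hs
    | m + 1 => simpa using hstep m (by omega)
  · rw [Finset.sum_range_succ']
    simp only [Nat.add_sub_cancel, Nat.succ_ne_zero, if_false]
    rw [hc, h0, add_comm]
    simp

lemma Mem_prependWebPath {ξ : ℤ × ℤ → ℤ} (hξ : ∀ z, ξ z = 1 ∨ ξ z = -1)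
    {a m b : ℤ × ℤ} {c : ℕ∞} (hp : pathTo ξ a m) (h : Mem ξ m b c) :
    Mem ξ a b c := by
  obtain ⟨hle, hY⟩ := hp
  have key : ∀ (d : ℕ) (a : ℤ × ℤ),
      Mem ξ (a.1 + d, Yfwd ξ a.1 a.2 d) b c → Mem ξ a b c := by
    intro d
    induction d with
    | zero => intro a h'; simpa [Yfwd] using h'
    | succ d ih =>
        intro a h'
        rw [Yfwd_shift] at h'
        have h'' : Mem ξ ((a.1+1, a.2 + ξ a).1 + d,
            Yfwd ξ (a.1+1, a.2 + ξ a).1 (a.1+1, a.2 + ξ a).2 d) b c := by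
          have : a.1 + ((d:ℤ)+1) = a.1 + 1 + d := by ring
          simpa [this] using h'
        have := ih _ h''
        have hstep : isStep a (a.1+1, a.2 + ξ a) := by
          refine ⟨rfl, ?_⟩
          rcases hξ a with h1 | h1
          · left; rw [h1]
          · right; rw [h1]; ring
        have := Mem_prepend hstep this
        simpa using this
  have hm : m = (a.1 + ((m.1 - a.1).toNat : ℕ), Yfwd ξ a.1 a.2 (m.1 - a.1).toNat) := by
    have h1 : m.1 = a.1 + ((m.1 - a.1).toNat : ℕ) := by omega
    have h2 : m.2 = Yfwd ξ a.1 a.2 (m.1 - a.1).toNat := by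
      rw [← hY]; rfl
    exact Prod.ext h1 h2
  exact key _ a (hm ▸ h)

lemma pathTo_prependWeb {ξ : ℤ × ℤ → ℤ} {a t : ℤ × ℤ}
    (h : pathTo ξ (a.1 + 1, a.2 + ξ a) t) : pathTo ξ a t := by
  obtain ⟨hle, hY⟩ := h
  simp only at hle hY
  refine ⟨by omega, ?_⟩
  have hd : (t.1 - a.1).toNat = (t.1 - (a.1 + 1)).toNat + 1 := by omega
  show Yfwd ξ a.1 a.2 (t.1 - a.1).toNat = t.2
  rw [hd, Yfwd_shift]
  simpa [Yf] using hY

lemma webChain_prependWeb {ξ : ℤ × ℤ → ℤ} {a b : ℤ × ℤ} {k : ℕ}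
    (h : webChain ξ (a.1 + 1, a.2 + ξ a) b k) : webChain ξ a b k := by
  obtain ⟨z, hev, hp⟩ := h
  refine ⟨z, hev, ?_⟩
  intro l hl
  rcases eq_or_ne l 0 with rfl | hl0
  · have := hp 0 hl
    simp only [if_pos rfl] at this ⊢
    exact pathTo_prependWeb this
  · simpa [hl0] using hp l hl

lemma webChain_prependJump {ξ : ℤ × ℤ → ℤ} {a b : ℤ × ℤ} {k : ℕ}
    (ha : Even (a.1 + a.2))
    (h : webChain ξ (a.1 + 1, a.2 - ξ a) b k) : webChain ξ a b (k + 1) := by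
  obtain ⟨z, hev, hp⟩ := h
  refine ⟨fun l => if l ≤ 1 then a else z (l - 1), ?_, ?_⟩
  · intro l h1 h2
    rcases Nat.lt_or_ge l 2 with hl | hl
    · have : l = 1 := by omega
      simp [this, ha]
    · have : ¬ l ≤ 1 := by omega
      simpa [this] using hev (l - 1) (by omega) (by omega)
  · intro l hl
    match l with
    | 0 =>
        simp only [if_pos rfl, Nat.succ_ne_zero]
        have : (0 : ℕ) ≠ k + 1 := by omega
        simp only [if_neg this]
        norm_num
        exact pathTo_self ξ a
    | 1 =>
        have h0 := hp 0 (by omega)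
        simp only [if_pos rfl] at h0
        rcases eq_or_ne k 0 with rfl | hk
        · simpa using h0
        · have h1 : (1 : ℕ) ≠ k + 1 := by omega
          have h2 : ¬ (1 + 1 : ℕ) ≤ 1 := by omega
          rw [if_neg (Ne.symm hk)] at h0
          simp only [if_neg h1, if_neg (by omega : (1:ℕ) ≠ 0), if_pos (le_refl 1),
            if_neg h2]
          simpa using h0
    | m + 2 =>
        have hold := hp (m + 1) (by omega)
        have e1 : ¬ (m + 2 : ℕ) ≤ 1 := by omega
        have e2 : ¬ (m + 2 + 1 : ℕ) ≤ 1 := by omega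
        have e3 : (m + 2 : ℕ) ≠ 0 := by omega
        have e4 : (m + 1 : ℕ) ≠ 0 := by omega
        simp only [if_neg e1, if_neg e2, if_neg e3, if_neg e4, Nat.add_sub_cancel] at hold ⊢
        have hiff : (m + 2 = k + 1) ↔ (m + 1 = k) := by omega
        rcases eq_or_ne (m + 1) k with he | he
        · simp only [if_pos (hiff.mpr he), if_pos he] at *
          exact hold
        · simp only [if_neg (fun h => he (hiff.mp h)), if_neg he] at *
          have : m + 1 + 1 - 1 = m + 1 := by omega
          rw [this]
          exact hold

lemma chain_Mem {ξ : ℤ × ℤ → ℤ} (hξ : ∀ z, ξ z = 1 ∨ ξ z = -1) {b : ℤ × ℤ} :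
    ∀ (k : ℕ) (a : ℤ × ℤ), webChain ξ a b k → Mem ξ a b (k : ℕ∞) := by
  intro k
  induction k with
  | zero =>
      intro a h
      obtain ⟨z, _, hp⟩ := h
      have := hp 0 (le_refl 0)
      simp only [if_pos rfl] at this
      exact Mem_prependWebPath hξ this (Mem_refl ξ b)
  | succ k ih =>
      intro a h
      obtain ⟨z, hev, hp⟩ := h
      have h0 := hp 0 (by omega)
      simp only [if_pos rfl, if_neg (by omega : (0:ℕ) ≠ k + 1)] at h0
      -- tail chain from the jumped point
      have htail : webChain ξ ((z 1).1 + 1, (z 1).2 - ξ (z 1)) b k := by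
        refine ⟨fun l => z (l + 1), fun l h1 h2 => hev (l + 1) (by omega) (by omega), ?_⟩
        intro l hl
        have hold := hp (l + 1) (by omega)
        simp only [if_neg (by omega : (l + 1 : ℕ) ≠ 0)] at hold
        rcases eq_or_ne l 0 with rfl | hl0
        · rcases eq_or_ne k 0 with rfl | hk
          · simpa using hold
          · have h1 : (1 : ℕ) ≠ k + 1 := by omega
            rw [if_neg h1] at hold
            simp only [if_pos rfl, if_neg (Ne.symm hk)]
            simpa using hold
        · have hiff : (l + 1 = k + 1) ↔ (l = k) := by omega
          rcases eq_or_ne l k with rfl | hlk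
          · simp only [if_pos rfl, if_neg hl0] at *
            simpa using hold
          · simp only [if_neg hlk, if_neg (fun h => hlk (hiff.mp h)), if_neg hl0] at *
            exact hold
      have hMem := ih _ htail
      have hstep : isStep (z 1) ((z 1).1 + 1, (z 1).2 - ξ (z 1)) := by
        refine ⟨rfl, ?_⟩
        rcases hξ (z 1) with h1 | h1
        · right; rw [h1]
        · left; rw [h1]; ring
      have hjump := Mem_prepend hstep hMem
      have hw : (if ((z 1).1 + 1, (z 1).2 - ξ (z 1)).2 = (z 1).2 + ξ (z 1) then (0:ℕ∞) else 1) = 1 := by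
        rcases hξ (z 1) with h1 | h1 <;> simp [h1]; omega
      rw [hw] at hjump
      have := Mem_prependWebPath hξ h0 hjump
      have hcast : ((k + 1 : ℕ) : ℕ∞) = 1 + (k : ℕ∞) := by push_cast; ring_nf
      rw [hcast]
      exact this

lemma webChain_self (ξ : ℤ × ℤ → ℤ) (a : ℤ × ℤ) : webChain ξ a a 0 :=
  ⟨fun _ => a, by omega, fun l hl => by
    have : l = 0 := by omega
    subst this
    simpa using pathTo_self ξ a⟩

lemma Mem_chain {ξ : ℤ × ℤ → ℤ} (hξ : ∀ z, ξ z = 1 ∨ ξ z = -1) :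
    ∀ (L : ℕ) (p : ℕ → ℤ × ℤ) (a : ℤ × ℤ), Even (a.1 + a.2) → p 0 = a →
      (∀ l < L, isStep (p l) (p (l + 1))) →
      ∃ k : ℕ, (k : ℕ∞) = ∑ l ∈ Finset.range L,
          (if (p (l + 1)).2 = (p l).2 + ξ (p l) then 0 else 1) ∧
        webChain ξ a (p L) k := by
  intro L
  induction L with
  | zero =>
      intro p a _ h0 _
      exact ⟨0, by simp, h0 ▸ webChain_self ξ a⟩
  | succ L ih =>
      intro p a ha h0 hstep
      have hs0 : isStep a (p 1) := h0 ▸ hstep 0 (by omega)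
      have ha' : Even ((p 1).1 + (p 1).2) := by
        rcases hs0.2 with h | h <;>
          · rw [Int.even_iff] at ha ⊢
            rw [hs0.1, h]
            omega
      obtain ⟨k', hk', hchain⟩ := ih (fun l => p (l + 1)) (p 1) ha' rfl
        (fun l hl => hstep (l + 1) (by omega))
      have hsum : ∑ l ∈ Finset.range (L + 1),
          (if (p (l + 1)).2 = (p l).2 + ξ (p l) then (0:ℕ∞) else 1) =
          (∑ l ∈ Finset.range L,
            (if (p (l + 1 + 1)).2 = (p (l + 1)).2 + ξ (p (l + 1)) then (0:ℕ∞) else 1)) +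
          (if (p 1).2 = (p 0).2 + ξ (p 0) then (0:ℕ∞) else 1) :=
        Finset.sum_range_succ' _ L
      rcases eq_or_ne ((p 1).2) (a.2 + ξ a) with hweb | hjump
      · -- first step is a web step
        have hp1 : p 1 = (a.1 + 1, a.2 + ξ a) := Prod.ext hs0.1 hweb
        refine ⟨k', ?_, ?_⟩
        · rw [hsum, h0, if_pos hweb, add_zero]
          exact hk'
        · exact webChain_prependWeb (hp1 ▸ hchain)
      · -- first step is a jump
        have hp1 : p 1 = (a.1 + 1, a.2 - ξ a) := by
          have h2 : (p 1).2 = a.2 - ξ a := by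
            rcases hξ a with hx | hx <;> rw [hx] at hjump ⊢ <;>
              rcases hs0.2 with h | h <;> omega
          exact Prod.ext hs0.1 h2
        refine ⟨k' + 1, ?_, ?_⟩
        · rw [hsum, h0, if_neg hjump, ← hk']
          push_cast
          ring_nf
        · exact webChain_prependJump ha (hp1 ▸ hchain)

/-- for every sign configuration `ξ` and all `(i,n),(j,m) ∈ ℤ²ₑ`,
the random walk web distance `D^RW(i,n;j,m)` equals the first passage time from
`(i,n)` to `(j,m)` in the directed graph whose edges along the web have weight `0`
and whose other edges have weight `1`. -/
theorem DRW_eq_first_passage (ξ : ℤ × ℤ → ℤ) (hξ : ∀ z, ξ z = 1 ∨ ξ z = -1)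
    (a b : ℤ × ℤ) (ha : Even (a.1 + a.2)) (hb : Even (b.1 + b.2)) :
    DRW ξ a b = FPT ξ a b := by
  unfold DRW FPT
  congr 1
  ext c
  simp only [Set.mem_setOf_eq]
  constructor
  · rintro ⟨k, rfl, hchain⟩
    obtain ⟨L, p, h0, hL, hs, hc⟩ := chain_Mem hξ k a hchain
    exact ⟨L, p, h0, hL, hs, hc⟩
  · rintro ⟨L, p, h0, hL, hs, rfl⟩
    obtain ⟨k, hk, hchain⟩ := Mem_chain hξ L p a ha h0 hs
    exact ⟨k, hk.symm, hL ▸ hchain⟩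

end
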